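/- In a Monte-Carlo Tree Game, for every non-terminal history h and every terminal history g of the sight restriction at h, there exists at least one true terminal history z in the forked extension s*(h) strictly extending g, so the sight-restricted utility u_i⌈_h(g), defined as the average of u_i(z) over such z, is well defined. -/

import Mathlib

def IsTerminal {A : Type*} (H : Set (List A)) (h : List A) : Prop :=
  h ∈ H ∧ ∀ a : A, h ++ [a] ∉ H

theorem exists_isTerminal_extension_of_forked {A : Type*} {H S : Set (List A)} (hS : S.Finite)
    (hfork : ∀ g ∈ S, ¬ IsTerminal H g → ∃ g' ∈ S, g <+: g' ∧ g ≠ g')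
    {g : List A} (hg : g ∈ S) : ∃ z ∈ S, IsTerminal H z ∧ g <+: z := by
  -- a longest extension of `g` inside `S` cannot be extended strictly, so it is terminal
  obtain ⟨z, ⟨hzS, hgz⟩, hzmax⟩ := Set.Finite.exists_maximalFor List.length
    {z | z ∈ S ∧ g <+: z} (hS.subset fun _ hz => hz.1) ⟨g, hg, List.prefix_refl g⟩
  refine ⟨z, hzS, ?_, hgz⟩
  by_contra hznt
  obtain ⟨z', hz'S, hzz', hne⟩ := hfork z hzS hznt
  have hlen : z.length ≤ z'.length := hzz'.length_le
  exact hne (hzz'.eq_of_length (hlen.antisymm (hzmax ⟨hz'S, hgz.trans hzz'⟩ hlen)))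

theorem sight_restricted_utility_well_defined_general {A : Type*}
    (H : Set (List A)) (Hfin : H.Finite)
    (s sstar : List A → Set (List A))
    (hsub : ∀ h, s h ⊆ sstar h)
    (hstar_sub : ∀ h, sstar h ⊆ H)
    (hfork : ∀ h, h ∈ H → ¬ IsTerminal H h →
      ∀ g ∈ sstar h, ¬ IsTerminal H g → ∃ g' ∈ sstar h, g <+: g' ∧ g ≠ g')
    (h : List A) (hh : h ∈ H) (hnt : ¬ IsTerminal H h)
    (g : List A) (hg : g ∈ s h) :
    {z | z ∈ sstar h ∧ IsTerminal H z ∧ g <+: z}.Nonempty :=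
  exists_isTerminal_extension_of_forked (Hfin.subset (hstar_sub h)) (hfork h hh hnt) (hsub h hg)

/-- In a Monte-Carlo Tree Game, for every non-terminal history `h` and every terminal
history `g` of the sight restriction at `h`, there is at least one true terminal history
`z` among the forked extension `s* h` extending `g`; hence the set over which the
sight-restricted utility `u_i⌈_h(g)` averages is nonempty, so the average is well defined. -/
theorem sight_restricted_utility_well_defined {A : Type*}
    (H : Set (List A)) (Hfin : H.Finite)
    (Hpc : ∀ h h' : List A, h' ∈ H → h <+: h' → h ∈ H)
    (s sstar : List A → Set (List A))
    (s_sub : ∀ h, s h ⊆ {g | g ∈ H ∧ h <+: g})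
    (hsub : ∀ h, s h ⊆ sstar h)
    (hstar_sub : ∀ h, sstar h ⊆ H)
    (hfork : ∀ h, h ∈ H → ¬ IsTerminal H h →
      ∀ g ∈ sstar h, ¬ IsTerminal H g → ∃ g' ∈ sstar h, g <+: g' ∧ g ≠ g')
    (h : List A) (hh : h ∈ H) (hnt : ¬ IsTerminal H h)
    -- `g` is a terminal history of the sight restriction at `h`:
    (g : List A) (hg : g ∈ s h) (hgterm : ∀ a : A, g ++ [a] ∉ s h) :
    {z | z ∈ sstar h ∧ IsTerminal H z ∧ g <+: z}.Nonempty :=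
  sight_restricted_utility_well_defined_general H Hfin s sstar hsub hstar_sub hfork h hh hnt g hg
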